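/- Let f : ℕ → ℕ be computed by a one-sided Turing machine with binary input convention, and suppose f is total. Then f cannot be the function x ↦ 2x (doubling), since by the Strips Theorem every total f computed this way satisfies f(x·2^(n+1)+i) = x·2^(n+1)+f(i) on each strip, forcing f to have slope 1 on infinitely many inputs, while doubling has slope 2 everywhere. -/

import Mathlib

/-- A one-sided Turing machine: transition table mapping (state, color) to
(written color, move-right?, next state), plus an initial state.
The tape is infinite to the left: cells are indexed by `ℕ` with cell 0 the rightmost;
moving right decreases the index, and moving right from cell 0 halts the machine. -/
structure TM (σ : Type) where
  trans : σ → Bool → Bool × Bool × σ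
  init : σ

/-- A configuration: current state, head position, tape contents. -/
structure Cfg (σ : Type) where
  state : σ
  pos : ℕ
  tape : ℕ → Bool

/-- One step of the machine: either a new configuration, or (if the head moves
right off cell 0) the final tape. -/
def TM.stepA {σ : Type} (M : TM σ) (c : Cfg σ) : Sum (Cfg σ) (ℕ → Bool) :=
  let r := M.trans c.state (c.tape c.pos)
  let tape' := Function.update c.tape c.pos r.1
  if r.2.1 then
    if c.pos = 0 then Sum.inr tape'
    else Sum.inl ⟨r.2.2, c.pos - 1, tape'⟩
  else Sum.inl ⟨r.2.2, c.pos + 1, tape'⟩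

/-- Running the machine for `t` steps from a configuration; once halted, the
final tape is kept. -/
def TM.run {σ : Type} (M : TM σ) (c : Cfg σ) : ℕ → Sum (Cfg σ) (ℕ → Bool)
  | 0 => Sum.inl c
  | t + 1 =>
    match M.run c t with
    | Sum.inl c' => M.stepA c'
    | Sum.inr tp => Sum.inr tp

/-- Initial configuration on binary input `i`: head at cell 0, cell `j` holds the
`j`-th binary digit of `i`. -/
def initCfg {σ : Type} (M : TM σ) (i : ℕ) : Cfg σ :=
  ⟨M.init, 0, fun j => i.testBit j⟩

/-- `M` halts on binary input `i` with binary output `r`. -/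
def ComputesOn {σ : Type} (M : TM σ) (i r : ℕ) : Prop :=
  ∃ t tp, M.run (initCfg M i) t = Sum.inr tp ∧ ∀ j, tp j = r.testBit j

/-- Initial configuration on unary input `x`: a block of `x+1` black cells at the
right end of the tape. -/
def unaryCfg {σ : Type} (M : TM σ) (x : ℕ) : Cfg σ :=
  ⟨M.init, 0, fun j => decide (j < x + 1)⟩

/-!
A one-sided machine that halts on input `i` within `t` steps never reaches the cells from
`n = t + i` on. On input `2 ^ n * x + i` these cells hold the bits of `x` and the cells below
them those of `i`, so the machine repeats its run on `i` and carries the bits of `x` along to the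
output: `f (2 ^ n * x + i) = 2 ^ n * x + f i` (the Strips Theorem). For doubling, `i = 0` and
`x = 1` give `2 * 2 ^ n = 2 ^ n`.
-/

def spliceTape (n : ℕ) (T U : ℕ → Bool) : ℕ → Bool := fun j => if j < n then T j else U j

lemma spliceTape_of_lt {n j : ℕ} (T U : ℕ → Bool) (h : j < n) : spliceTape n T U j = T j :=
  if_pos h

lemma spliceTape_of_le {n j : ℕ} (T U : ℕ → Bool) (h : n ≤ j) : spliceTape n T U j = U j :=
  if_neg (Nat.not_lt.2 h)

lemma update_spliceTape {n p : ℕ} (T U : ℕ → Bool) (b : Bool) (hp : p < n) :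
    Function.update (spliceTape n T U) p b = spliceTape n (Function.update T p b) U := by
  funext j
  by_cases hj : j = p
  · subst hj; simp [spliceTape_of_lt _ _ hp]
  · simp only [Function.update_of_ne hj, spliceTape]

lemma testBit_two_pow_mul_add_eq_spliceTape (x : ℕ) {n i : ℕ} (hi : i < 2 ^ n) :
    Nat.testBit (2 ^ n * x + i) = spliceTape n i.testBit (fun j => x.testBit (j - n)) :=
  funext (Nat.testBit_two_pow_mul_add x hi)

namespace Cfg

variable {σ : Type}

def splice (n : ℕ) (U : ℕ → Bool) (c : Cfg σ) : Cfg σ :=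
  { c with tape := spliceTape n c.tape U }

end Cfg

namespace TM

variable {σ : Type} (M : TM σ)

lemma stepA_splice {n : ℕ} (U : ℕ → Bool) {c : Cfg σ} (hc : c.pos < n) :
    M.stepA (c.splice n U) = (M.stepA c).map (Cfg.splice n U) (spliceTape n · U) := by
  simp only [stepA, Cfg.splice, spliceTape_of_lt _ _ hc, update_spliceTape _ _ _ hc]
  split_ifs <;> rfl

lemma pos_le_of_stepA_eq_inl {c d : Cfg σ} (h : M.stepA c = .inl d) : d.pos ≤ c.pos + 1 := by
  unfold stepA at h
  dsimp only at h
  split_ifs at h <;> cases h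
  all_goals dsimp only; omega

lemma pos_le_of_run_eq_inl {c d : Cfg σ} {s : ℕ} (h : M.run c s = .inl d) :
    d.pos ≤ c.pos + s := by
  induction s generalizing d with
  | zero => cases h; simp
  | succ s ih =>
    rw [run] at h
    split at h
    · next d' hd' => have := ih hd'; have := M.pos_le_of_stepA_eq_inl h; omega
    · cases h

/-- Within `s` steps from position `p` the head only visits cells below `p + s`, so what lies
from cell `n ≥ p + s` on is carried along unchanged. -/
lemma run_splice {n : ℕ} (U : ℕ → Bool) {c : Cfg σ} {s : ℕ} (hs : c.pos + s ≤ n) :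
    M.run (c.splice n U) s = (M.run c s).map (Cfg.splice n U) (spliceTape n · U) := by
  induction s with
  | zero => rfl
  | succ s ih =>
    rw [run, run, ih (by omega)]
    rcases hrun : M.run c s with d | tp
    · exact M.stepA_splice U (by have := M.pos_le_of_run_eq_inl hrun; omega)
    · rfl

lemma run_add_of_eq_inr {c : Cfg σ} {s : ℕ} {tp : ℕ → Bool} (h : M.run c s = .inr tp)
    (k : ℕ) : M.run c (s + k) = .inr tp := by
  induction k with
  | zero => exact h
  | succ k ih => rw [← Nat.add_assoc, run, ih]

lemma eq_of_run_eq_inr {c : Cfg σ} {s s' : ℕ} {tp tp' : ℕ → Bool} (h : M.run c s = .inr tp)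
    (h' : M.run c s' = .inr tp') : tp = tp' := by
  wlog hle : s ≤ s' generalizing s s' tp tp'
  · exact (this h' h (by omega)).symm
  have := M.run_add_of_eq_inr h (s' - s)
  rw [Nat.add_sub_cancel' hle, h'] at this
  exact (Sum.inr.inj this).symm

end TM

section ComputesOn

variable {σ : Type} {M : TM σ}

lemma ComputesOn.unique {i r r' : ℕ} (h : ComputesOn M i r) (h' : ComputesOn M i r') :
    r = r' := by
  obtain ⟨t, tp, ht, htp⟩ := h
  obtain ⟨t', tp', ht', htp'⟩ := h'
  cases M.eq_of_run_eq_inr ht ht'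
  exact Nat.eq_of_testBit_eq fun j => (htp j).symm.trans (htp' j)

lemma initCfg_two_pow_mul_add (M : TM σ) (x : ℕ) {n i : ℕ} (hi : i < 2 ^ n) :
    initCfg M (2 ^ n * x + i) = (initCfg M i).splice n (fun j => x.testBit (j - n)) := by
  simp only [initCfg, Cfg.splice, testBit_two_pow_mul_add_eq_spliceTape x hi]

theorem ComputesOn.strips {i r : ℕ} (h : ComputesOn M i r) :
    ∃ n, ∀ x, ComputesOn M (2 ^ n * x + i) (2 ^ n * x + r) := by
  obtain ⟨t, tp, ht, htp⟩ := h
  -- `n = t + i` lies beyond the top bit of `i` and every cell visited in the `t` steps.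
  have hi : i < 2 ^ (t + i) :=
    Nat.lt_two_pow_self.trans_le (Nat.pow_le_pow_right two_pos (Nat.le_add_left i t))
  have hrun : ∀ x, M.run (initCfg M (2 ^ (t + i) * x + i)) t
      = .inr (spliceTape (t + i) tp (fun j => x.testBit (j - (t + i)))) := by
    intro x
    rw [initCfg_two_pow_mul_add M x hi, M.run_splice _ (by simp [initCfg]), ht]
    rfl
  -- The strip `x = 0` is the original run, so the output tape is blank from cell `t + i` on.
  have hr : r < 2 ^ (t + i) := by
    have htp0 := M.eq_of_run_eq_inr ht (by simpa using hrun 0)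
    refine Nat.lt_pow_two_of_testBit r fun j hj => ?_
    rw [← htp, htp0, spliceTape_of_le _ _ hj]
  refine ⟨t + i, fun x => ⟨t, _, hrun x, fun j => ?_⟩⟩
  rw [testBit_two_pow_mul_add_eq_spliceTape x hr]
  simp only [spliceTape, htp]

end ComputesOn

/-- No one-sided Turing machine with the binary input convention computes the
total doubling function `x ↦ 2x`: by the Strips Theorem such a machine satisfies
`f(x·2^(n+1)+i) = x·2^(n+1)+f(i)` on each strip (slope 1), while doubling has
slope 2 everywhere. -/
theorem doubling_not_computable {σ : Type} (M : TM σ) :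
    ¬ ∀ i : ℕ, ComputesOn M i (2 * i) := by
  intro h
  obtain ⟨n, hstrip⟩ := (h 0).strips
  have hfixed : 2 ^ n * 1 + 0 = 2 * (2 ^ n * 1 + 0) := (hstrip 1).unique (h _)
  have hpos := Nat.two_pow_pos n
  omega
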